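/- arXiv:1111.1850 — 3 statements merged into one kernel-verified Lean document; each statement's English description precedes it below -/
import Mathlib

section
/- Let G be a finite group that is an internal semidirect product G = H ⋊ 𝒢 of subgroups H and 𝒢 (with H normal). For σ ∈ 𝒢, define φ_σ : N_G(σ) → (ℤ/o(σ)ℤ)ˣ by φ_σ(ρ) = α where ρσρ⁻¹ = σ^α, and similarly φ'_σ on the normalizer N_𝒢(σ) taken inside 𝒢. Then for every σ ∈ 𝒢, the image φ_σ(N_G(σ)) equals φ'_σ(N_𝒢(σ)). -/
/-- The image of the map `φ_σ` (sending `ρ` with `ρσρ⁻¹ = σ^α` to the unit `α`)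
restricted to a set `S` of elements normalizing `⟨σ⟩`. -/
def phiImage {G : Type*} [Group G] (σ : G) (S : Set G) : Set (ZMod (orderOf σ))ˣ :=
  {α | ∃ ρ ∈ S, ρ * σ * ρ⁻¹ = σ ^ ((α : ZMod (orderOf σ)).val)}

/-!
Write `ρ ∈ N_G(σ)` as `ρ = h g` with `h ∈ H`, `g ∈ 𝒢`. Both `g σ g⁻¹` and `σ^α = h (g σ g⁻¹) h⁻¹`
lie in `𝒢`, and two elements of a complement of the normal subgroup `H` that are conjugate by an
element of `H` agree, since they have the same image in `G ⧸ H ≅ 𝒢`. Hence `g σ g⁻¹ = σ^α`, so `g`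
lies in `N_𝒢(σ)` and realises the same unit `α`.
-/

theorem phiImage_mono {G : Type*} [Group G] (σ : G) {S T : Set G} (hST : S ⊆ T) :
    phiImage σ S ⊆ phiImage σ T :=
  fun _ ⟨ρ, hρ, hconj⟩ => ⟨ρ, hST hρ, hconj⟩

theorem Subgroup.eq_of_conj_eq_of_inf_eq_bot {G : Type*} [Group G] {H K : Subgroup G}
    [H.Normal] (hdisj : H ⊓ K = ⊥) {h x y : G} (hh : h ∈ H) (hx : x ∈ K) (hy : y ∈ K)
    (hconj : h * x * h⁻¹ = y) : x = y := by
  have hcomm : y * x⁻¹ ∈ H := by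
    rw [← hconj, show h * x * h⁻¹ * x⁻¹ = h * (x * h⁻¹ * x⁻¹) by group]
    exact H.mul_mem hh (‹H.Normal›.conj_mem _ (H.inv_mem hh) x)
  have hbot : y * x⁻¹ ∈ H ⊓ K := ⟨hcomm, K.mul_mem hy (K.inv_mem hx)⟩
  rw [hdisj, Subgroup.mem_bot, mul_inv_eq_one] at hbot
  exact hbot.symm

theorem mem_normalizer_zpowers_of_conj_eq_pow {G : Type*} [Group G] [Finite G] {σ g : G}
    {k : ℕ} (hconj : g * σ * g⁻¹ = σ ^ k) :
    g ∈ Subgroup.normalizer (Subgroup.zpowers σ : Set G) := by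
  refine Subgroup.mem_normalizer_fintype ?_
  rintro _ ⟨m, rfl⟩
  refine ⟨k * m, ?_⟩
  rw [← conj_zpow, hconj, ← zpow_natCast, ← zpow_mul]

theorem stmt0 {G : Type*} [Group G] [Finite G] (H 𝒢 : Subgroup G)
    [H.Normal] (hdisj : H ⊓ 𝒢 = ⊥) (hprod : H ⊔ 𝒢 = ⊤)
    (σ : G) (hσ : σ ∈ 𝒢) :
    phiImage σ (Subgroup.normalizer (Subgroup.zpowers σ : Set G) : Set G) =
      phiImage σ {ρ : G | ρ ∈ 𝒢 ∧ ρ ∈ Subgroup.normalizer (Subgroup.zpowers σ : Set G)} := by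
  refine Set.Subset.antisymm ?_ (phiImage_mono σ fun _ hρ => hρ.2)
  rintro α ⟨ρ, -, hconj⟩
  have hρ : ρ ∈ ((H ⊔ 𝒢 : Subgroup G) : Set G) := by simp [hprod]
  rw [Subgroup.normal_mul] at hρ
  obtain ⟨h, hh, g, hg, rfl⟩ := hρ
  have hg_conj : g * σ * g⁻¹ = σ ^ (α : ZMod (orderOf σ)).val := by
    refine Subgroup.eq_of_conj_eq_of_inf_eq_bot hdisj hh
      (𝒢.mul_mem (𝒢.mul_mem hg hσ) (𝒢.inv_mem hg)) (𝒢.pow_mem hσ _) ?_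
    rw [← hconj]
    group
  exact ⟨g, ⟨hg, mem_normalizer_zpowers_of_conj_eq_pow hg_conj⟩, hg_conj⟩
end

section
/- Let B be an abelian group, A ≤ B a subgroup, m₁, …, mₙ positive integers (n ≥ 1), and let d = gcd(m₁,…,mₙ). With the half-power notation A^{t/2} (equal to {a^{t/2} : a ∈ A} if t is even, and {x ∈ B : x² ∈ A^t} if t is odd), the product of subsets ∏_{i=1}^n A^{m_i/2} equals A^{d/2}. -/
open scoped Pointwise

def halfPow {B : Type*} [CommGroup B] (A : Subgroup B) (t : ℕ) : Set B :=
  if Even t then {x | ∃ a ∈ A, x = a ^ (t / 2)} else {x | ∃ a ∈ A, x ^ 2 = a ^ t}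

section aux
variable {B : Type*} [CommGroup B] (A : Subgroup B)

lemma halfPow_sq {t : ℕ} {x : B} (hx : x ∈ halfPow A t) : ∃ a ∈ A, x ^ 2 = a ^ t := by
  unfold halfPow at hx
  split_ifs at hx with h
  · obtain ⟨a, ha, rfl⟩ := hx
    exact ⟨a, ha, by rw [← pow_mul, Nat.div_mul_cancel h.two_dvd]⟩
  · exact hx

lemma halfPow_zpow {t : ℕ} {x : B} (hx : x ∈ halfPow A t) (k : ℤ) :
    x ^ k ∈ halfPow A t := by
  unfold halfPow at hx ⊢
  split_ifs at hx ⊢ with h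
  · obtain ⟨a, ha, rfl⟩ := hx
    refine ⟨a ^ k, A.zpow_mem ha k, ?_⟩
    rw [← zpow_natCast (a ^ k), ← zpow_mul, mul_comm, zpow_mul, zpow_natCast]
  · obtain ⟨a, ha, hxa⟩ := hx
    refine ⟨a ^ k, A.zpow_mem ha k, ?_⟩
    rw [← zpow_natCast (x ^ k), ← zpow_mul, mul_comm, zpow_mul, zpow_natCast, hxa,
      ← zpow_natCast (a ^ k), ← zpow_mul, mul_comm, zpow_mul, zpow_natCast]

lemma even_gcd_iff {s t : ℕ} : Even (Nat.gcd s t) ↔ Even s ∧ Even t := by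
  simp only [even_iff_two_dvd]
  exact Nat.dvd_gcd_iff

lemma halfPow_mul {s t : ℕ} (hs : 0 < s) (ht : 0 < t) :
    halfPow A s * halfPow A t = halfPow A (Nat.gcd s t) := by
  set g := Nat.gcd s t with hg
  have hgpos : 0 < g := Nat.gcd_pos_of_pos_left t hs
  have hgs : g ∣ s := Nat.gcd_dvd_left s t
  have hgt : g ∣ t := Nat.gcd_dvd_right s t
  ext x
  constructor
  · rintro ⟨y, hy, z, hz, rfl⟩
    obtain ⟨a, ha, hya⟩ := halfPow_sq A hy
    obtain ⟨b, hb, hzb⟩ := halfPow_sq A hz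
    by_cases hge : Even g
    · -- s, t both even
      obtain ⟨he_s, he_t⟩ := even_gcd_iff.mp hge
      unfold halfPow at hy hz ⊢
      rw [if_pos he_s] at hy
      rw [if_pos he_t] at hz
      rw [if_pos hge]
      obtain ⟨a', ha', rfl⟩ := hy
      obtain ⟨b', hb', rfl⟩ := hz
      refine ⟨a' ^ (s / g) * b' ^ (t / g), mul_mem (A.pow_mem ha' _) (A.pow_mem hb' _), ?_⟩
      have h1 : s / 2 = (s / g) * (g / 2) := by
        rw [Nat.div_mul_div_comm hgs hge.two_dvd, mul_comm g 2, Nat.mul_div_mul_right _ _ hgpos]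
      have h2 : t / 2 = (t / g) * (g / 2) := by
        rw [Nat.div_mul_div_comm hgt hge.two_dvd, mul_comm g 2, Nat.mul_div_mul_right _ _ hgpos]
      rw [h1, h2, pow_mul, pow_mul]
      exact (mul_pow _ _ _).symm
    · -- g odd
      unfold halfPow
      rw [if_neg hge]
      refine ⟨a ^ (s / g) * b ^ (t / g), mul_mem (A.pow_mem ha _) (A.pow_mem hb _), ?_⟩
      rw [mul_pow, hya, hzb, mul_pow, ← pow_mul, ← pow_mul,
        Nat.div_mul_cancel hgs, Nat.div_mul_cancel hgt]
  · intro hx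
    by_cases hge : Even g
    · obtain ⟨he_s, he_t⟩ := even_gcd_iff.mp hge
      unfold halfPow at hx
      rw [if_pos hge] at hx
      obtain ⟨a, ha, rfl⟩ := hx
      set α := Nat.gcdA (s / 2) (t / 2) with hα
      set β := Nat.gcdB (s / 2) (t / 2) with hβ
      have hg2 : g = 2 * Nat.gcd (s / 2) (t / 2) := by
        rw [← Nat.gcd_mul_left, Nat.mul_div_cancel' he_s.two_dvd,
          Nat.mul_div_cancel' he_t.two_dvd]
      have hbez : ((g / 2 : ℕ) : ℤ) = (s / 2 : ℕ) * α + (t / 2 : ℕ) * β := by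
        have := Nat.gcd_eq_gcd_ab (s / 2) (t / 2)
        rw [hg2, Nat.mul_div_cancel_left _ (by norm_num : 0 < 2)]
        exact this
      refine ⟨(a ^ α) ^ (s / 2), ?_, (a ^ β) ^ (t / 2), ?_, ?_⟩
      · unfold halfPow
        rw [if_pos he_s]
        exact ⟨a ^ α, A.zpow_mem ha α, rfl⟩
      · unfold halfPow
        rw [if_pos he_t]
        exact ⟨a ^ β, A.zpow_mem ha β, rfl⟩
      · rw [← zpow_natCast a (g / 2), hbez, zpow_add, mul_comm ((s / 2 : ℕ) : ℤ) α,
          mul_comm ((t / 2 : ℕ) : ℤ) β, zpow_mul, zpow_mul, zpow_natCast, zpow_natCast]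
    · -- g odd
      unfold halfPow at hx
      rw [if_neg hge] at hx
      obtain ⟨a, ha, hxa⟩ := hx
      set p := s / g with hp
      set q := t / g with hq
      have hps : g * p = s := Nat.mul_div_cancel' hgs
      have hqt : g * q = t := Nat.mul_div_cancel' hgt
      have hcop : Nat.Coprime p q := Nat.coprime_div_gcd_div_gcd hgpos
      have hy0 : x ^ p ∈ halfPow A s := by
        unfold halfPow
        split_ifs with hse
        · -- s even, g odd ⇒ p even
          have hpe : Even p := by
            rcases Nat.even_mul.mp (hps ▸ hse) with h | h
            · exact absurd h hge
            · exact h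
          obtain ⟨r, hr⟩ := hpe
          refine ⟨a, ha, ?_⟩
          have hsr : s = (g * r) * 2 := by rw [← hps, hr]; ring
          have hs2 : s / 2 = g * r := by omega
          rw [hs2, hr, ← two_mul, pow_mul, hxa, ← pow_mul]
        · exact ⟨a, ha, by rw [← pow_mul, mul_comm p 2, pow_mul, hxa, ← pow_mul, hps]⟩
      have hz0 : x ^ q ∈ halfPow A t := by
        unfold halfPow
        split_ifs with hte
        · have hqe : Even q := by
            rcases Nat.even_mul.mp (hqt ▸ hte) with h | h
            · exact absurd h hge
            · exact h
          obtain ⟨r, hr⟩ := hqe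
          refine ⟨a, ha, ?_⟩
          have htr : t = (g * r) * 2 := by rw [← hqt, hr]; ring
          have ht2 : t / 2 = g * r := by omega
          rw [ht2, hr, ← two_mul, pow_mul, hxa, ← pow_mul]
        · exact ⟨a, ha, by rw [← pow_mul, mul_comm q 2, pow_mul, hxa, ← pow_mul, hqt]⟩
      set α := Nat.gcdA p q with hα
      set β := Nat.gcdB p q with hβ
      have hbez : (1 : ℤ) = (p : ℤ) * α + (q : ℤ) * β := by
        have := Nat.gcd_eq_gcd_ab p q
        rwa [hcop] at this
      refine ⟨(x ^ p) ^ α, halfPow_zpow A hy0 α, (x ^ q) ^ β, halfPow_zpow A hz0 β, ?_⟩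
      show (x ^ p) ^ α * (x ^ q) ^ β = x
      rw [← zpow_natCast x p, ← zpow_natCast x q, ← zpow_mul, ← zpow_mul, ← zpow_add,
        ← hbez, zpow_one]

end aux

lemma halfPow_prod {B : Type*} [CommGroup B] (A : Subgroup B) {ι : Type*} (m : ι → ℕ)
    (hm : ∀ i, 0 < m i) (s : Finset ι) (hs : s.Nonempty) :
    ∏ i ∈ s, halfPow A (m i) = halfPow A (s.gcd m) := by
  classical
  induction hs using Finset.Nonempty.cons_induction with
  | singleton i => simp [Finset.gcd_singleton]
  | cons i s hi hs ih =>
    rw [Finset.prod_cons, ih, Finset.cons_eq_insert, Finset.gcd_insert]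
    rw [show gcd (m i) (s.gcd m) = Nat.gcd (m i) (s.gcd m) from rfl]
    rw [halfPow_mul A (hm i)]
    refine Nat.pos_of_ne_zero fun h0 => ?_
    exact (hm hs.choose).ne' (Finset.gcd_eq_zero_iff.mp h0 _ hs.choose_spec)

theorem stmt4 {B : Type*} [CommGroup B] (A : Subgroup B) (n : ℕ) (hn : 1 ≤ n)
    (m : Fin n → ℕ) (hm : ∀ i, 0 < m i) :
    ∏ i : Fin n, halfPow A (m i) = halfPow A (Finset.univ.gcd m) := by
  exact halfPow_prod A m hm Finset.univ (Finset.univ_nonempty_iff.mpr ⟨⟨0, hn⟩⟩)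
end

section
/- Let ℓ be a prime and let 𝒢 = ⟨σ, τ : τ^{ℓ²} = 1, σ^ℓ = τ^{cℓ}, στσ⁻¹ = τ^{1+aℓ}⟩ for integers a, c. Let G be a group, H ◁ G abelian, and τ₀ ∈ G of order ℓ², σ₀ ∈ G centralizing H with σ₀τ₀σ₀⁻¹ = τ₀^{1+aℓ}, σ₀^ℓ = τ₀^{cℓ}. Suppose h₀ ∈ H satisfies (h₀τ₀)^ℓ = 1. Then for every integer j, the assignments τ ↦ h₀^j τ₀, σ ↦ σ₀^{1−j}, extending by the identity on H, define a group homomorphism from H ⋊ 𝒢 to G (respecting all the defining relations: σ-conjugation acts trivially on H, τ-conjugation acts as τ₀-conjugation on H, (h₀^j τ₀) is conjugated by σ₀^{1−j} to its (1+aℓ)-th power, σ₀^{(1−j)ℓ} = (h₀^j τ₀)^{cℓ}, and (h₀^j τ₀)^{ℓ²} = 1). -/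
/-!
Write `N_n(h) = h · τ₀hτ₀⁻¹ ⋯ τ₀^{n-1}hτ₀^{1-n}`, so that `(hτ₀)^n = N_n(h) τ₀^n`. Since `H` is
abelian and normal, `N_n` is a homomorphism on `H`, and `(h₀τ₀)^ℓ = 1` says `N_ℓ(h₀) = τ₀^{-ℓ}`;
hence `(h₀^j τ₀)^ℓ = τ₀^{(1-j)ℓ}`. Every relation then reduces to one among powers of `τ₀`,
checked modulo `ℓ² = orderOf τ₀`, together with `σ₀^k τ₀ σ₀^{-k} = τ₀^{1+kaℓ}`, which holds
because `(1+aℓ)^k ≡ 1+kaℓ` modulo `ℓ²`.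
-/

section AbelianNormal

variable {G : Type*} [Group G]

def conjNorm (τ : G) : ℕ → G → G
  | 0, _ => 1
  | n + 1, h => h * (τ * conjNorm τ n h * τ⁻¹)

lemma mul_pow_eq_conjNorm_mul_pow (τ h : G) (n : ℕ) : (h * τ) ^ n = conjNorm τ n h * τ ^ n := by
  induction n with
  | zero => simp [conjNorm]
  | succ n ih =>
    rw [pow_succ', ih, conjNorm, pow_succ']
    group

variable (H : Subgroup G) [H.Normal]

lemma conjNorm_mem (τ : G) (n : ℕ) {h : G} (hh : h ∈ H) : conjNorm τ n h ∈ H := by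
  induction n with
  | zero => exact H.one_mem
  | succ n ih => exact H.mul_mem hh (Subgroup.Normal.conj_mem ‹_› _ ih τ)

variable {H}

lemma mul_conj_eq_conj_of_mem (hab : ∀ x ∈ H, ∀ y ∈ H, x * y = y * x) (τ : G) {g h : G}
    (hg : g ∈ H) (hh : h ∈ H) : g * τ * h * (g * τ)⁻¹ = τ * h * τ⁻¹ :=
  calc g * τ * h * (g * τ)⁻¹ = g * (τ * h * τ⁻¹) * g⁻¹ := by group
    _ = τ * h * τ⁻¹ := by
      rw [hab _ hg _ (Subgroup.Normal.conj_mem ‹_› h hh τ), mul_inv_cancel_right]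

lemma conjNorm_mul (hab : ∀ x ∈ H, ∀ y ∈ H, x * y = y * x) (τ : G) (n : ℕ)
    {h h' : G} (hh : h ∈ H) (hh' : h' ∈ H) :
    conjNorm τ n (h * h') = conjNorm τ n h * conjNorm τ n h' := by
  induction n with
  | zero => simp [conjNorm]
  | succ n ih =>
    set x := τ * conjNorm τ n h * τ⁻¹
    have hx : h' * x = x * h' :=
      hab _ hh' _ (Subgroup.Normal.conj_mem ‹_› _ (conjNorm_mem H τ n hh) τ)
    calc conjNorm τ (n + 1) (h * h')
        = h * (h' * x) * (τ * conjNorm τ n h' * τ⁻¹) := by simp only [conjNorm, ih, x]; group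
      _ = h * x * (h' * (τ * conjNorm τ n h' * τ⁻¹)) := by rw [hx]; group

lemma conjNorm_zpow (hab : ∀ x ∈ H, ∀ y ∈ H, x * y = y * x) (τ : G) (n : ℕ)
    {h : G} (hh : h ∈ H) (j : ℤ) : conjNorm τ n (h ^ j) = conjNorm τ n h ^ j :=
  map_zpow (MonoidHom.mk' (fun x : H ↦ conjNorm τ n x)
    fun x y ↦ conjNorm_mul hab τ n x.2 y.2) ⟨h, hh⟩ j

lemma zpow_mul_pow_eq_of_mul_pow_eq_one (hab : ∀ x ∈ H, ∀ y ∈ H, x * y = y * x)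
    {τ h : G} (hh : h ∈ H) {n : ℕ} (hn : (h * τ) ^ n = 1) (j : ℤ) :
    (h ^ j * τ) ^ (n : ℤ) = τ ^ ((1 - j) * n) := by
  have hN : conjNorm τ n h = (τ ^ (n : ℤ))⁻¹ := by
    rw [mul_pow_eq_conjNorm_mul_pow] at hn
    rw [zpow_natCast, eq_inv_of_mul_eq_one_left hn]
  rw [zpow_natCast, mul_pow_eq_conjNorm_mul_pow, conjNorm_zpow hab τ n hh, hN, ← zpow_natCast τ n,
    ← zpow_neg, ← zpow_mul, ← zpow_add]
  congr 1
  ring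

end AbelianNormal

section TwistedConj

variable {G : Type*} [Group G]

lemma pow_conj_eq_mul_pow {σ x z : G} (hx : σ * x * σ⁻¹ = x * z) (hz : Commute σ z) (k : ℕ) :
    σ ^ k * x * (σ ^ k)⁻¹ = x * z ^ k := by
  induction k with
  | zero => simp
  | succ k ih =>
    calc σ ^ (k + 1) * x * (σ ^ (k + 1))⁻¹ = σ * (σ ^ k * x * (σ ^ k)⁻¹) * σ⁻¹ := by group
      _ = σ * x * σ⁻¹ * (σ * z ^ k * σ⁻¹) := by rw [ih]; group
      _ = x * z ^ (k + 1) := by rw [hx, (hz.pow_right k).eq, mul_inv_cancel_right, pow_succ']; group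

lemma zpow_conj_eq_mul_zpow {σ x z : G} (hx : σ * x * σ⁻¹ = x * z) (hz : Commute σ z) (k : ℤ) :
    σ ^ k * x * (σ ^ k)⁻¹ = x * z ^ k := by
  obtain ⟨k, rfl | rfl⟩ := Int.eq_nat_or_neg k
  · simpa using pow_conj_eq_mul_pow hx hz k
  · have hx' : σ⁻¹ * x * σ⁻¹⁻¹ = x * z⁻¹ :=
      calc σ⁻¹ * x * σ⁻¹⁻¹ = σ⁻¹ * x * (σ * z) * z⁻¹ := by group
        _ = σ⁻¹ * (σ * x * σ⁻¹) * σ * z⁻¹ := by rw [hz.eq, hx]; group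
        _ = x * z⁻¹ := by group
    simpa using pow_conj_eq_mul_pow hx' hz.inv_left.inv_right k

lemma zpow_conj_eq_zpow_of_conj_eq_zpow {σ τ : G} {m : ℤ} (hm : (orderOf τ : ℤ) ∣ m ^ 2)
    (h : σ * τ * σ⁻¹ = τ ^ (1 + m)) (k : ℤ) : σ ^ k * τ * (σ ^ k)⁻¹ = τ ^ (1 + k * m) := by
  have hcomm : Commute σ (τ ^ m) := by
    have : σ * τ ^ m * σ⁻¹ = τ ^ m := by
      rw [← conj_zpow, h, ← zpow_mul, ← orderOf_dvd_sub_iff_zpow_eq_zpow]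
      exact hm.trans ⟨1, by ring⟩
    exact mul_inv_eq_iff_eq_mul.mp this
  rw [zpow_conj_eq_mul_zpow (by rw [h, zpow_add, zpow_one]) hcomm k, ← zpow_mul, ← zpow_one_add,
    mul_comm m]

end TwistedConj

theorem stmt19_general {G : Type*} [Group G] (H : Subgroup G) [H.Normal]
    (hab : ∀ x ∈ H, ∀ y ∈ H, x * y = y * x)
    (ℓ : ℕ) (a c : ℤ)
    (τ₀ σ₀ : G) (hτ₀ : orderOf τ₀ = ℓ ^ 2)
    (hσ₀H : ∀ h ∈ H, σ₀ * h * σ₀⁻¹ = h)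
    (hconj : σ₀ * τ₀ * σ₀⁻¹ = τ₀ ^ (1 + a * ℓ))
    (hσ₀ℓ : σ₀ ^ (ℓ : ℤ) = τ₀ ^ (c * ℓ))
    (h₀ : G) (hh₀ : h₀ ∈ H) (hpow : (h₀ * τ₀) ^ ℓ = 1) :
    ∀ j : ℤ,
      (∀ h ∈ H, (σ₀ ^ (1 - j)) * h * (σ₀ ^ (1 - j))⁻¹ = h) ∧
      (∀ h ∈ H, (h₀ ^ j * τ₀) * h * (h₀ ^ j * τ₀)⁻¹ = τ₀ * h * τ₀⁻¹) ∧
      (σ₀ ^ (1 - j)) * (h₀ ^ j * τ₀) * (σ₀ ^ (1 - j))⁻¹ = (h₀ ^ j * τ₀) ^ (1 + a * ℓ) ∧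
      (σ₀ ^ (1 - j)) ^ (ℓ : ℤ) = (h₀ ^ j * τ₀) ^ (c * ℓ) ∧
      (h₀ ^ j * τ₀) ^ ((ℓ : ℤ) ^ 2) = 1 := by
  intro j
  have hord : (orderOf τ₀ : ℤ) = (ℓ : ℤ) ^ 2 := by rw [hτ₀, Nat.cast_pow]
  have hσ₀comm : ∀ h ∈ H, Commute σ₀ h := fun h hh ↦ mul_inv_eq_iff_eq_mul.mp (hσ₀H h hh)
  have hkey := zpow_mul_pow_eq_of_mul_pow_eq_one hab hh₀ hpow j
  have hσ₀τ₀ := zpow_conj_eq_zpow_of_conj_eq_zpow (m := a * ℓ) (by rw [hord]; exact ⟨a ^ 2, by ring⟩)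
    hconj (1 - j)
  refine ⟨fun h hh ↦ ?_, fun h hh ↦ ?_, ?_, ?_, ?_⟩
  · rw [((hσ₀comm h hh).zpow_left _).eq, mul_inv_cancel_right]
  · exact mul_conj_eq_conj_of_mem hab τ₀ (zpow_mem hh₀ j) hh
  · have hσ₀h₀ : σ₀ ^ (1 - j) * h₀ ^ j * (σ₀ ^ (1 - j))⁻¹ = h₀ ^ j := by
      rw [(((hσ₀comm h₀ hh₀).zpow_right j).zpow_left _).eq, mul_inv_cancel_right]
    calc σ₀ ^ (1 - j) * (h₀ ^ j * τ₀) * (σ₀ ^ (1 - j))⁻¹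
        = (σ₀ ^ (1 - j) * h₀ ^ j * (σ₀ ^ (1 - j))⁻¹) * (σ₀ ^ (1 - j) * τ₀ * (σ₀ ^ (1 - j))⁻¹) := by
          group
      _ = h₀ ^ j * τ₀ * τ₀ ^ ((1 - j) * ℓ * a) := by
          rw [hσ₀h₀, hσ₀τ₀, zpow_one_add, mul_assoc, show (1 - j) * (a * ℓ) = (1 - j) * ℓ * a by ring]
      _ = (h₀ ^ j * τ₀) ^ (1 + a * ℓ) := by
          rw [zpow_one_add, mul_comm a, zpow_mul (h₀ ^ j * τ₀), hkey, ← zpow_mul]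
  · rw [← zpow_mul, mul_comm (1 - j), zpow_mul, hσ₀ℓ, ← zpow_mul, mul_comm c,
      zpow_mul (h₀ ^ j * τ₀), hkey, ← zpow_mul]
    congr 1
    ring
  · rw [sq, zpow_mul, hkey, ← zpow_mul, ← orderOf_dvd_iff_zpow_eq_one, hord]
    exact ⟨1 - j, by ring⟩

/-- The assignments `τ ↦ h₀^j τ₀`, `σ ↦ σ₀^{1-j}`, extended by the identity on `H`, respect
all the defining relations of `H ⋊ ⟨σ, τ : τ^{ℓ²} = 1, σ^ℓ = τ^{cℓ}, στσ⁻¹ = τ^{1+aℓ}⟩`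
(where `σ` acts trivially on `H` and `τ` acts as conjugation by `τ₀`), and hence define a
group homomorphism from this semidirect product to `G`. -/
theorem stmt19 {G : Type*} [Group G] (H : Subgroup G) [H.Normal]
    (hab : ∀ x ∈ H, ∀ y ∈ H, x * y = y * x)
    (ℓ : ℕ) (hℓ : ℓ.Prime) (a c : ℤ)
    (τ₀ σ₀ : G) (hτ₀ : orderOf τ₀ = ℓ ^ 2)
    (hσ₀H : ∀ h ∈ H, σ₀ * h * σ₀⁻¹ = h)
    (hconj : σ₀ * τ₀ * σ₀⁻¹ = τ₀ ^ (1 + a * ℓ))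
    (hσ₀ℓ : σ₀ ^ (ℓ : ℤ) = τ₀ ^ (c * ℓ))
    (h₀ : G) (hh₀ : h₀ ∈ H) (hpow : (h₀ * τ₀) ^ ℓ = 1) :
    ∀ j : ℤ,
      (∀ h ∈ H, (σ₀ ^ (1 - j)) * h * (σ₀ ^ (1 - j))⁻¹ = h) ∧
      (∀ h ∈ H, (h₀ ^ j * τ₀) * h * (h₀ ^ j * τ₀)⁻¹ = τ₀ * h * τ₀⁻¹) ∧
      (σ₀ ^ (1 - j)) * (h₀ ^ j * τ₀) * (σ₀ ^ (1 - j))⁻¹ = (h₀ ^ j * τ₀) ^ (1 + a * ℓ) ∧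
      (σ₀ ^ (1 - j)) ^ (ℓ : ℤ) = (h₀ ^ j * τ₀) ^ (c * ℓ) ∧
      (h₀ ^ j * τ₀) ^ ((ℓ : ℤ) ^ 2) = 1 :=
  stmt19_general H hab ℓ a c τ₀ σ₀ hτ₀ hσ₀H hconj hσ₀ℓ h₀ hh₀ hpow
end
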